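/- Pythagorean theorem for KL divergence: let α ∈ ℝ^k, let ν* = p^{Xᵀα} and x = Xν*, so that ν* minimizes S(·|p) over the affine slice {ν : Xν = x}. Then for every positive probability vector ν with Xν = x, S(ν|p) = S(ν|ν*) + S(ν*|p). -/
import Mathlib


open Real

/-- `p` is a positive probability vector on `{1,…,n}`. -/
def IsPPV {n : ℕ} (p : Fin n → ℝ) : Prop := (∀ i, 0 < p i) ∧ (∑ i, p i) = 1

/-- Relative entropy (KL divergence) `S(ν|q) = ∑ i, ν i · log (ν i / q i)`. -/
noncomputable def relEnt {n : ℕ} (ν q : Fin n → ℝ) : ℝ := ∑ i, ν i * Real.log (ν i / q i)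

/-- Free energy `F(μ|p) = log (∑ i, p i · exp (μ i))`. -/
noncomputable def freeEnergy {n : ℕ} (p μ : Fin n → ℝ) : ℝ :=
  Real.log (∑ i, p i * Real.exp (μ i))

/-- Exponentially tilted measure `(p^μ)_i = p i · exp (μ i − F(μ|p))`. -/
noncomputable def tilted {n : ℕ} (p μ : Fin n → ℝ) : Fin n → ℝ :=
  fun i => p i * Real.exp (μ i - freeEnergy p μ)

lemma relEnt_nonneg' {n : ℕ} {ν q : Fin n → ℝ} (hν : IsPPV ν) (hq : IsPPV q) :
    0 ≤ relEnt ν q := by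
  have h : ∀ i : Fin n, ν i - q i ≤ ν i * Real.log (ν i / q i) := by
    intro i
    have hνi := hν.1 i; have hqi := hq.1 i
    have h1 : Real.log (q i / ν i) ≤ q i / ν i - 1 :=
      Real.log_le_sub_one_of_pos (by positivity)
    have h2 : Real.log (ν i / q i) = - Real.log (q i / ν i) := by
      rw [← Real.log_inv]; congr 1; field_simp
    have h3 : ν i * (q i / ν i) = q i := by field_simp
    nlinarith [mul_le_mul_of_nonneg_left h1 hνi.le]
  calc (0:ℝ) = ∑ i, (ν i - q i) := by
        rw [Finset.sum_sub_distrib, hν.2, hq.2]; ring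
    _ ≤ _ := Finset.sum_le_sum (fun i _ => h i)

/-- Pythagorean theorem for KL divergence: with `ν* = p^{Xᵀα}` and `x = Xν*`, `ν*`
minimizes `S(·|p)` over the slice `{ν : Xν = x}`, and for every positive probability
vector `ν` with `Xν = x`, `S(ν|p) = S(ν|ν*) + S(ν*|p)`. -/
theorem pythagorean_kl
    {n k : ℕ} (hn : 1 ≤ n) (hk : 1 ≤ k)
    (p : Fin n → ℝ) (hp : IsPPV p) (X : Matrix (Fin k) (Fin n) ℝ) (α : Fin k → ℝ)
    (νstar : Fin n → ℝ) (hνstar : νstar = tilted p (fun i => ∑ a, α a * X a i))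
    (x : Fin k → ℝ) (hx : x = X.mulVec νstar) :
    (∀ ν : Fin n → ℝ, IsPPV ν → X.mulVec ν = x → relEnt νstar p ≤ relEnt ν p) ∧
    (∀ ν : Fin n → ℝ, IsPPV ν → X.mulVec ν = x →
      relEnt ν p = relEnt ν νstar + relEnt νstar p) := by
  set μ : Fin n → ℝ := fun i => ∑ a, α a * X a i with hμ
  set F : ℝ := freeEnergy p μ with hFdef
  have hne : (Finset.univ : Finset (Fin n)).Nonempty :=
    ⟨⟨0, by omega⟩, Finset.mem_univ _⟩
  have hFsum : (0:ℝ) < ∑ i, p i * Real.exp (μ i) :=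
    Finset.sum_pos (fun i _ => mul_pos (hp.1 i) (Real.exp_pos _)) hne
  have hνs_pos : ∀ i, 0 < νstar i := by
    intro i; rw [hνstar]; exact mul_pos (hp.1 i) (Real.exp_pos _)
  have hνs_sum : (∑ i, νstar i) = 1 := by
    rw [hνstar]
    simp only [tilted, ← hμ, ← hFdef]
    have : ∀ i, p i * Real.exp (μ i - F) = p i * Real.exp (μ i) * Real.exp (-F) := by
      intro i; rw [Real.exp_sub, Real.exp_neg]; field_simp
    simp only [this]
    rw [← Finset.sum_mul, hFdef, freeEnergy, Real.exp_neg, Real.exp_log hFsum]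
    field_simp
  have hppv : IsPPV νstar := ⟨hνs_pos, hνs_sum⟩
  have hlog : ∀ i, Real.log (νstar i / p i) = μ i - F := by
    intro i
    have : νstar i / p i = Real.exp (μ i - F) := by
      rw [hνstar]; simp only [tilted, ← hμ, ← hFdef]
      field_simp [(hp.1 i).ne']
    rw [this, Real.log_exp]
  have key : ∀ ν : Fin n → ℝ, IsPPV ν → X.mulVec ν = x →
      relEnt ν p = relEnt ν νstar + relEnt νstar p := by
    intro ν hν hXν
    have hμeq : (∑ i, ν i * μ i) = ∑ i, νstar i * μ i := by
      have hswap : ∀ w : Fin n → ℝ, (∑ i, w i * μ i) = ∑ a, α a * X.mulVec w a := by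
        intro w
        simp only [hμ, Matrix.mulVec, dotProduct, Finset.mul_sum,
          Finset.sum_mul]
        rw [Finset.sum_comm]
        congr 1; ext i; congr 1; ext a; ring
      rw [hswap, hswap, hXν, hx]
    have hterm : ∀ i, ν i * Real.log (ν i / p i)
        = ν i * Real.log (ν i / νstar i) + ν i * (μ i - F) := by
      intro i
      have h1 : Real.log (ν i / p i) = Real.log (ν i / νstar i) + Real.log (νstar i / p i) := by
        rw [← Real.log_mul (div_pos (hν.1 i) (hνs_pos i)).ne' (div_pos (hνs_pos i) (hp.1 i)).ne']
        congr 1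
        rw [div_mul_div_comm, mul_comm (νstar i) (p i), mul_div_mul_right _ _ (hνs_pos i).ne']
      rw [h1, hlog, mul_add]
    have hterm' : ∀ i, νstar i * Real.log (νstar i / p i) = νstar i * (μ i - F) := by
      intro i; rw [hlog]
    simp only [relEnt]
    rw [Finset.sum_congr rfl (fun i _ => hterm i),
        Finset.sum_congr rfl (fun i _ => hterm' i), Finset.sum_add_distrib]
    congr 1
    simp only [mul_sub, Finset.sum_sub_distrib, ← Finset.sum_mul, hν.2, hνs_sum, hμeq]
  exact ⟨fun ν hν hXν => by
      have := relEnt_nonneg' hν hppv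
      rw [key ν hν hXν]; linarith, key⟩
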